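/- arXiv:1402.5096 — 7 statements merged into one kernel-verified Lean document; each statement's English description precedes it below -/
import Mathlib

section
/- For any quiver Q, any weight θ ∈ ℤ^{Q0}, and any vectors l, u ∈ ℕ^{Q1}, there exist a quiver Q' containing no oriented cycles and a weight θ' ∈ ℤ^{Q'0} such that the flow polytope ∇(Q,θ,l,u) and the quiver polytope ∇(Q',θ') are integral-affinely equivalent. -/
/-- The flow map of a quiver with arrow set `A`, vertex set `V`, source map `s`
and target map `t`. -/
def flowMap {V A : Type} [Fintype A] [DecidableEq V] (s t : A → V) (x : A → ℝ) (v : V) : ℝ :=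
  (∑ a : A, if t a = v then x a else 0) - (∑ a : A, if s a = v then x a else 0)

/-- The quiver polyhedron `∇(Q,θ)`. -/
def quiverPolyhedron {V A : Type} [Fintype A] [DecidableEq V] (s t : A → V) (θ : V → ℤ) :
    Set (A → ℝ) :=
  {x | (∀ a, 0 ≤ x a) ∧ ∀ v, flowMap s t x v = (θ v : ℝ)}

/-- A point of `ℝ^A` is a lattice point if all its coordinates are integers. -/
def IsLatticePt {A : Type} (x : A → ℝ) : Prop := ∀ a, ∃ z : ℤ, x a = (z : ℝ)

/-- Integral-affine equivalence of lattice polyhedra. -/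
def IntegralAffinelyEquivalent {A B : Type}
    (P : Set (A → ℝ)) (Q : Set (B → ℝ)) : Prop :=
  ∃ (φ : (A → ℝ) →ᵃ[ℝ] (B → ℝ)) (ψ : (B → ℝ) →ᵃ[ℝ] (A → ℝ)),
    (∀ x ∈ affineSpan ℝ P, ψ (φ x) = x) ∧
    (∀ y ∈ affineSpan ℝ Q, φ (ψ y) = y) ∧
    φ '' (affineSpan ℝ P : Set (A → ℝ)) = (affineSpan ℝ Q : Set (B → ℝ)) ∧
    φ '' ((affineSpan ℝ P : Set (A → ℝ)) ∩ {x | IsLatticePt x}) =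
      (affineSpan ℝ Q : Set (B → ℝ)) ∩ {y | IsLatticePt y} ∧
    φ '' P = Q

/-- The quiver has an oriented cycle. -/
def HasOrientedCycle {V A : Type} (s t : A → V) : Prop :=
  ∃ (n : ℕ) (f : Fin (n + 1) → A), ∀ i : Fin (n + 1), t (f i) = s (f (i + 1))

/-- The arrow `a` is removable for `(Q,θ)`. -/
def Removable {V A : Type} [Fintype A] [DecidableEq V] [DecidableEq A]
    (s t : A → V) (θ : V → ℤ) (a : A) : Prop :=
  IntegralAffinelyEquivalent (quiverPolyhedron s t θ)
    (quiverPolyhedron (fun b : {b : A // b ≠ a} => s b.1) (fun b => t b.1) θ)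

/-- The non-loop arrow `a` is contractable for `(Q,θ)`. -/
def Contractable {V A : Type} [Fintype A] [DecidableEq V] [DecidableEq A]
    (s t : A → V) (θ : V → ℤ) (a : A) (h : s a ≠ t a) : Prop :=
  IntegralAffinelyEquivalent (quiverPolyhedron s t θ)
    (quiverPolyhedron
      (fun b : {b : A // b ≠ a} =>
        if hb : s b.1 = s a then (⟨t a, Ne.symm h⟩ : {v : V // v ≠ s a}) else ⟨s b.1, hb⟩)
      (fun b : {b : A // b ≠ a} =>
        if hb : t b.1 = s a then (⟨t a, Ne.symm h⟩ : {v : V // v ≠ s a}) else ⟨t b.1, hb⟩)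
      (fun v : {v : V // v ≠ s a} => if v.1 = t a then θ (s a) + θ (t a) else θ v.1))

/-- The pair `(Q,θ)` is tight. -/
def Tight {V A : Type} [Fintype A] [DecidableEq V] [DecidableEq A]
    (s t : A → V) (θ : V → ℤ) : Prop :=
  (quiverPolyhedron s t θ).Nonempty ∧
  (∀ a : A, ¬ Removable s t θ a) ∧
  ∀ (a : A) (h : s a ≠ t a), ¬ Contractable s t θ a h

/-- The flow polytope `∇(Q,θ,l,u)`. -/
def flowPolytope {V A : Type} [Fintype A] [DecidableEq V] (s t : A → V) (θ : V → ℤ)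
    (l u : A → ℕ) : Set (A → ℝ) :=
  {x | (∀ a, (l a : ℝ) ≤ x a ∧ x a ≤ (u a : ℝ)) ∧ ∀ v, flowMap s t x v = (θ v : ℝ)}

/-!
Replace every arrow `a : i → j` by a new vertex `a` together with two arrows `i → a` and
`j → a`, carrying `x a - l a` and `u a - x a`. The weight `u a - l a` at the new vertex forces
these two flows to add up correctly, and their nonnegativity is exactly `l a ≤ x a ≤ u a`.
Every arrow of the new quiver runs from an old vertex to a new one, so it has no oriented
cycle, and `x ↦ (x - l, u - x)` is an integral affine map with the integral left inverse
`y ↦ y ∘ Sum.inl + l`.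
-/

theorem not_hasOrientedCycle_of_target_ne_source {V A : Type} {s t : A → V}
    (h : ∀ a b, t a ≠ s b) : ¬ HasOrientedCycle s t := by
  rintro ⟨n, f, hf⟩
  exact h _ _ (hf 0)

theorem integralAffinelyEquivalent_of_leftInverse {A B : Type}
    {P : Set (A → ℝ)} {Q : Set (B → ℝ)} (φ : (A → ℝ) →ᵃ[ℝ] (B → ℝ))
    (ψ : (B → ℝ) →ᵃ[ℝ] (A → ℝ))
    (hψφ : Function.LeftInverse ψ φ) (hPQ : φ '' P = Q)
    (hφ : ∀ x, IsLatticePt x → IsLatticePt (φ x))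
    (hψ : ∀ y, IsLatticePt y → IsLatticePt (ψ y)) :
    IntegralAffinelyEquivalent P Q := by
  have hspan : φ '' (affineSpan ℝ P : Set (A → ℝ)) = affineSpan ℝ Q := by
    rw [← AffineSubspace.coe_map, AffineSubspace.map_span, hPQ]
  refine ⟨φ, ψ, fun x _ => hψφ x, ?_, hspan, ?_, hPQ⟩
  · intro y hy
    rw [← SetLike.mem_coe, ← hspan] at hy
    obtain ⟨x, -, rfl⟩ := hy
    rw [hψφ x]
  · ext y
    constructor
    · rintro ⟨x, ⟨hx, hxZ⟩, rfl⟩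
      exact ⟨hspan ▸ ⟨x, hx, rfl⟩, hφ x hxZ⟩
    · rintro ⟨hy, hyZ⟩
      rw [← hspan] at hy
      obtain ⟨x, hx, rfl⟩ := hy
      exact ⟨x, ⟨hx, hψφ x ▸ hψ _ hyZ⟩, rfl⟩

namespace Subdivision

variable {V A : Type} (s t : A → V) (θ : V → ℤ) (l u : A → ℕ)

def source : A ⊕ A → V ⊕ A := Sum.elim (Sum.inl ∘ s) (Sum.inl ∘ t)

def target : A ⊕ A → V ⊕ A := Sum.elim Sum.inr Sum.inr

theorem not_hasOrientedCycle : ¬ HasOrientedCycle (source s t) (target (V := V) (A := A)) :=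
  not_hasOrientedCycle_of_target_ne_source fun a b => by
    cases a <;> cases b <;> simp [source, target]

noncomputable def slack : (A → ℝ) →ᵃ[ℝ] (A ⊕ A → ℝ) where
  toFun x := Sum.elim (fun a => x a - l a) (fun a => u a - x a)
  linear :=
    { toFun := fun x => Sum.elim x (-x)
      map_add' := by intro x y; funext b; cases b <;> simp; ring
      map_smul' := by intro c x; funext b; cases b <;> simp }
  map_vadd' := by intro p v; funext b; cases b <;> simp <;> ring

noncomputable def unslack : (A ⊕ A → ℝ) →ᵃ[ℝ] (A → ℝ) where
  toFun y a := y (Sum.inl a) + l a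
  linear :=
    { toFun := fun y a => y (Sum.inl a)
      map_add' := by intro x y; rfl
      map_smul' := by intro c x; rfl }
  map_vadd' := by intro p v; funext a; simp; ring

@[simp]
theorem slack_inl (x : A → ℝ) (a : A) : slack l u x (Sum.inl a) = x a - l a := rfl

@[simp]
theorem slack_inr (x : A → ℝ) (a : A) : slack l u x (Sum.inr a) = u a - x a := rfl

@[simp]
theorem unslack_apply (y : A ⊕ A → ℝ) (a : A) : unslack l y a = y (Sum.inl a) + l a := rfl

theorem isLatticePt_slack {x : A → ℝ} (hx : IsLatticePt x) : IsLatticePt (slack l u x) := by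
  rintro (a | a) <;> obtain ⟨z, hz⟩ := hx a
  · exact ⟨z - l a, by simp [hz]⟩
  · exact ⟨u a - z, by simp [hz]⟩

theorem isLatticePt_unslack {y : A ⊕ A → ℝ} (hy : IsLatticePt y) :
    IsLatticePt (unslack l y) := by
  intro a
  obtain ⟨z, hz⟩ := hy (Sum.inl a)
  exact ⟨z + l a, by simp [hz]⟩

theorem leftInverse_unslack_slack : Function.LeftInverse (unslack l) (slack l u) := by
  intro x
  funext a
  simp

theorem slack_unslack {y : A ⊕ A → ℝ}
    (hy : ∀ a, y (Sum.inl a) + y (Sum.inr a) = u a - l a) :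
    slack l u (unslack l y) = y := by
  funext b
  rcases b with a | a
  · simp
  · simp only [slack_inr, unslack_apply]
    linarith [hy a]

variable [Fintype A] [DecidableEq V]

def weight : V ⊕ A → ℤ :=
  Sum.elim (fun v => θ v + ∑ a with s a = v, (l a : ℤ) - ∑ a with t a = v, (u a : ℤ))
    (fun a => u a - l a)

@[simp]
theorem weight_inl (v : V) :
    weight s t θ l u (Sum.inl v) =
      θ v + ∑ a with s a = v, (l a : ℤ) - ∑ a with t a = v, (u a : ℤ) :=
  rfl

@[simp]
theorem weight_inr (a : A) : weight s t θ l u (Sum.inr a) = u a - l a := rfl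

variable [DecidableEq A]

theorem flowMap_inr (y : A ⊕ A → ℝ) (a : A) :
    flowMap (source s t) target y (Sum.inr a) = y (Sum.inl a) + y (Sum.inr a) := by
  simp [flowMap, source, target, Fintype.sum_sum_type]

theorem flowMap_inl (y : A ⊕ A → ℝ) (v : V) :
    flowMap (source s t) target y (Sum.inl v) =
      -((∑ a with s a = v, y (Sum.inl a)) + ∑ a with t a = v, y (Sum.inr a)) := by
  simp [flowMap, source, target, Fintype.sum_sum_type, Finset.sum_filter]

theorem flowMap_slack_inl (x : A → ℝ) (v : V) :
    flowMap (source s t) target (slack l u x) (Sum.inl v) =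
      flowMap s t x v + ∑ a with s a = v, (l a : ℝ) - ∑ a with t a = v, (u a : ℝ) := by
  rw [flowMap_inl, flowMap]
  simp only [slack_inl, slack_inr, Finset.sum_sub_distrib, ← Finset.sum_filter]
  ring

theorem slack_mem_iff (x : A → ℝ) :
    slack l u x ∈ quiverPolyhedron (source s t) target (weight s t θ l u) ↔
      x ∈ flowPolytope s t θ l u := by
  have hflow : ∀ v, flowMap (source s t) target (slack l u x) (Sum.inl v) =
      weight s t θ l u (Sum.inl v) ↔ flowMap s t x v = θ v := by
    intro v
    rw [flowMap_slack_inl, weight_inl]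
    push_cast
    constructor <;> intro h <;> linarith
  simp only [quiverPolyhedron, flowPolytope, Set.mem_ofPred_eq, Sum.forall, slack_inl, slack_inr,
    sub_nonneg, hflow, flowMap_inr]
  simp [forall_and]

theorem image_slack :
    slack l u '' flowPolytope s t θ l u =
      quiverPolyhedron (source s t) target (weight s t θ l u) := by
  ext y
  constructor
  · rintro ⟨x, hx, rfl⟩
    exact (slack_mem_iff s t θ l u x).2 hx
  · intro hy
    have hsum : ∀ a, y (Sum.inl a) + y (Sum.inr a) = u a - l a := fun a => by
      simpa [flowMap_inr] using hy.2 (Sum.inr a)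
    refine ⟨unslack l y, (slack_mem_iff s t θ l u _).1 ?_, slack_unslack l u hsum⟩
    rwa [slack_unslack l u hsum]

end Subdivision

/-- every flow polytope is integral-affinely equivalent to the quiver
polytope of a quiver with no oriented cycles. -/
theorem stmt0 {V A : Type} [Fintype V] [Fintype A] [DecidableEq V] (s t : A → V)
    (θ : V → ℤ) (l u : A → ℕ) :
    ∃ (V' A' : Type) (iV : Fintype V') (iA : Fintype A') (dV : DecidableEq V')
      (s' t' : A' → V') (θ' : V' → ℤ),
      ¬ HasOrientedCycle s' t' ∧
      IntegralAffinelyEquivalent (flowPolytope s t θ l u)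
        (@quiverPolyhedron V' A' iA dV s' t' θ') := by
  classical
  refine ⟨V ⊕ A, A ⊕ A, inferInstance, inferInstance, inferInstance, Subdivision.source s t,
    Subdivision.target, Subdivision.weight s t θ l u, Subdivision.not_hasOrientedCycle s t, ?_⟩
  exact integralAffinelyEquivalent_of_leftInverse (Subdivision.slack l u) (Subdivision.unslack l)
    (Subdivision.leftInverse_unslack_slack l u) (Subdivision.image_slack s t θ l u)
    (fun _ => Subdivision.isLatticePt_slack l u) (fun _ => Subdivision.isLatticePt_unslack l)
end

section
/- Let Q be a quiver, θ ∈ ℤ^{Q0} a weight, and let Q^1,…,Q^t be the maximal subquivers of Q containing no oriented cycles (i.e., the subquivers with vertex set Q0 whose arrow sets are maximal among subsets of Q1 containing no oriented cycle), with ∇(Q^i,θ) regarded as a subset of ℝ^{Q1} via extension by zero. Then the set of lattice points of ∇(Q,θ) has the Minkowski sum decomposition ∇(Q,θ) ∩ ℤ^{Q1} = (∇(Q,0) ∩ ℤ^{Q1}) + ⋃_{i=1}^{t} (∇(Q^i,θ) ∩ ℤ^{Q1}), i.e., it equals {m + n : m ∈ ∇(Q,0) ∩ ℤ^{Q1}, n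 ∈ ∇(Q^i,θ) ∩ ℤ^{Q1} for some i}. -/
/-- The quiver has an oriented cycle all of whose arrows lie in `E`. -/
def HasOrientedCycleIn {V A : Type} (s t : A → V) (E : Set A) : Prop :=
  ∃ (n : ℕ) (f : Fin (n + 1) → A), (∀ i, f i ∈ E) ∧
    ∀ i : Fin (n + 1), t (f i) = s (f (i + 1))

/-- `E` is the arrow set of a maximal subquiver of `Q` (with all the vertices)
containing no oriented cycles. -/
def MaximalAcyclic {V A : Type} (s t : A → V) (E : Set A) : Prop :=
  ¬ HasOrientedCycleIn s t E ∧ ∀ E' : Set A, E ⊆ E' → ¬ HasOrientedCycleIn s t E' → E' = E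


/-!
If the support of a nonnegative integral flow `x` contains an oriented cycle, it contains a simple
one (a shortest one), and the indicator vector of a simple cycle is an integral circulation
bounded by `x`. Subtracting it lowers `∑ x`, so iterating writes every lattice point of `∇(Q,θ)`
as an integral circulation plus a lattice point of `∇(Q,θ)` with acyclic support, and any
acyclic arrow set extends to a maximal one. The reverse inclusion is additivity of the flow map.
-/

lemma IsLatticePt.add {A : Type} {x y : A → ℝ} (hx : IsLatticePt x) (hy : IsLatticePt y) :
    IsLatticePt (x + y) := fun a => by
  obtain ⟨m, hm⟩ := hx a
  obtain ⟨n, hn⟩ := hy a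
  exact ⟨m + n, by simp [hm, hn]⟩

lemma IsLatticePt.exists_nat_of_nonneg {A : Type} {x : A → ℝ} (hx : IsLatticePt x)
    (hx0 : ∀ a, 0 ≤ x a) : ∃ z : A → ℕ, x = (↑) ∘ z := by
  choose z hz using hx
  refine ⟨fun a => (z a).toNat, funext fun a => ?_⟩
  have h : 0 ≤ z a := by exact_mod_cast hz a ▸ hx0 a
  rw [Function.comp_apply, hz a]
  exact_mod_cast (Int.toNat_of_nonneg h).symm

section Flow

variable {V A : Type} [Fintype A] [DecidableEq V] (s t : A → V)

lemma flowMap_add (x y : A → ℝ) (v : V) :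
    flowMap s t (x + y) v = flowMap s t x v + flowMap s t y v := by
  simp only [flowMap, Pi.add_apply, ite_add_zero, Finset.sum_add_distrib]
  ring

lemma flowMap_natCast_add (m n : A → ℕ) (v : V) :
    flowMap s t ((↑) ∘ (m + n)) v = flowMap s t ((↑) ∘ m) v + flowMap s t ((↑) ∘ n) v := by
  rw [← flowMap_add]
  congr 1
  ext a
  simp

lemma mem_quiverPolyhedron_and_isLatticePt_iff (θ : V → ℤ) (x : A → ℝ) :
    x ∈ quiverPolyhedron s t θ ∧ IsLatticePt x ↔
      ∃ z : A → ℕ, x = (↑) ∘ z ∧ ∀ v, flowMap s t ((↑) ∘ z) v = θ v := by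
  constructor
  · rintro ⟨⟨hx0, hxθ⟩, hx⟩
    obtain ⟨z, rfl⟩ := hx.exists_nat_of_nonneg hx0
    exact ⟨z, rfl, hxθ⟩
  · rintro ⟨z, rfl, hz⟩
    exact ⟨⟨fun a => Nat.cast_nonneg _, hz⟩, fun a => ⟨z a, rfl⟩⟩

end Flow

section Cycles

variable {V A : Type} (s t : A → V)

def IsOrientedCycle {n : ℕ} (f : Fin (n + 1) → A) : Prop :=
  ∀ i, t (f i) = s (f (i + 1))

variable {s t}

lemma IsOrientedCycle.exists_shorter {n : ℕ} {f : Fin (n + 1) → A} (hf : IsOrientedCycle s t f)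
    {i j : Fin (n + 1)} (hij : i < j) (h : f i = f j) :
    ∃ m < n, ∃ g : Fin (m + 1) → A, Set.range g ⊆ Set.range f ∧ IsOrientedCycle s t g := by
  have hij' : i.val < j.val := hij
  have hj : j.val ≤ n := Nat.lt_succ_iff.mp j.isLt
  refine ⟨j - i - 1, by omega, fun k => f ⟨i + k, by have := k.isLt; omega⟩,
    Set.range_comp_subset_range _ _, fun k => ?_⟩
  have hk := k.isLt
  have hnext : (⟨i + k, by omega⟩ + 1 : Fin (n + 1)) = ⟨i + k + 1, by omega⟩ :=
    Fin.ext (Fin.val_add_one_of_lt (by rw [Fin.lt_def, Fin.val_last]; dsimp only; omega))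
  dsimp only
  rw [hf, hnext]
  rcases eq_or_ne k (Fin.last _) with rfl | hk'
  · simp only [Fin.last_add_one, Fin.val_zero, add_zero, h]
    congr
    rw [Fin.val_last]
    omega
  · simp [Fin.val_add_one, hk', add_assoc]

lemma HasOrientedCycleIn.exists_injective {E : Set A} (h : HasOrientedCycleIn s t E) :
    ∃ (n : ℕ) (f : Fin (n + 1) → A), f.Injective ∧ (∀ i, f i ∈ E) ∧ IsOrientedCycle s t f := by
  classical
  obtain ⟨f, hfE, hf : IsOrientedCycle s t f⟩ := Nat.find_spec h
  refine ⟨_, f, fun i j hfij => ?_, hfE, hf⟩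
  by_contra hne
  obtain ⟨m, hm, g, hgf, hg⟩ := (lt_or_gt_of_ne hne).elim (hf.exists_shorter · hfij)
    (hf.exists_shorter · hfij.symm)
  exact Nat.find_min h hm ⟨g, Set.range_subset_iff.1 (hgf.trans (Set.range_subset_iff.2 hfE)), hg⟩

lemma IsOrientedCycle.flowMap_indicator_range [Fintype A] [DecidableEq V] {n : ℕ}
    {f : Fin (n + 1) → A} (hf : IsOrientedCycle s t f) (hinj : f.Injective) (v : V) :
    flowMap s t ((↑) ∘ (Set.range f).indicator (1 : A → ℕ)) v = 0 := by
  have hcount : ∀ w : A → V,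
      (∑ a, if w a = v then ((↑) ∘ (Set.range f).indicator (1 : A → ℕ)) a else (0 : ℝ)) =
        ∑ i, if w (f i) = v then 1 else 0 := fun w =>
    (Fintype.sum_of_injective f hinj _ _ (fun a ha => by simp [ha]) (fun i => by simp)).symm
  rw [flowMap, hcount, hcount, sub_eq_zero]
  exact Fintype.sum_equiv (Equiv.addRight 1) _ _ fun i => by rw [hf i]; rfl

end Cycles

section Decomposition

variable {V A : Type} (s t : A → V)

lemma exists_maximalAcyclic_superset [Finite A] {E₀ : Set A}
    (h : ¬ HasOrientedCycleIn s t E₀) : ∃ E, E₀ ⊆ E ∧ MaximalAcyclic s t E := by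
  obtain ⟨E, hE₀, hE⟩ := Finite.exists_le_maximal (p := (¬ HasOrientedCycleIn s t ·)) h
  exact ⟨E, hE₀, hE.1, fun E' hEE' hE' => (hE.2 hE' hEE').antisymm hEE'⟩

theorem exists_circulation_add_acyclic [Fintype A] [DecidableEq V] (z : A → ℕ) :
    ∃ m n : A → ℕ, z = m + n ∧ (∀ v, flowMap s t ((↑) ∘ m) v = 0) ∧
      ¬ HasOrientedCycleIn s t {a | n a ≠ 0} := by
  induction hN : ∑ a, z a using Nat.strong_induction_on generalizing z with
  | _ N ih =>
  by_cases hcyc : HasOrientedCycleIn s t {a | z a ≠ 0}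
  swap
  · exact ⟨0, z, (zero_add z).symm, fun v => by simp [flowMap], hcyc⟩
  obtain ⟨n, f, hinj, hfz, hf⟩ := hcyc.exists_injective
  set c : A → ℕ := (Set.range f).indicator 1
  have hcz : c ≤ z := fun a => by
    by_cases ha : a ∈ Set.range f
    · obtain ⟨i, rfl⟩ := ha
      simpa [c, Nat.one_le_iff_ne_zero] using hfz i
    · simp [c, ha]
  have hlt : ∑ a, (z - c) a < N := hN ▸ Finset.sum_lt_sum (fun a _ => Nat.sub_le _ _)
    ⟨f 0, Finset.mem_univ _, by
      have hz0 : z (f 0) ≠ 0 := hfz 0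
      have hc0 : c (f 0) = 1 := Set.indicator_of_mem (Set.mem_range_self 0) _
      rw [Pi.sub_apply, hc0]
      omega⟩
  obtain ⟨m, n', hzc, hm, hn'⟩ := ih _ hlt (z - c) rfl
  refine ⟨m + c, n', ?_, fun v => ?_, hn'⟩
  · rw [add_right_comm, ← hzc, tsub_add_cancel_of_le hcz]
  · rw [flowMap_natCast_add, hm, hf.flowMap_indicator_range hinj, add_zero]

end Decomposition

theorem stmt1_general {V A : Type} [Fintype A] [DecidableEq V] (s t : A → V)
    (θ : V → ℤ) (x : A → ℝ) :
    (x ∈ quiverPolyhedron s t θ ∧ IsLatticePt x) ↔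
    ∃ (m n : A → ℝ) (E : Set A), MaximalAcyclic s t E ∧
      m ∈ quiverPolyhedron s t (fun _ => 0) ∧ IsLatticePt m ∧
      n ∈ quiverPolyhedron s t θ ∧ IsLatticePt n ∧ (∀ a ∉ E, n a = 0) ∧
      x = m + n := by
  constructor
  · intro hx
    obtain ⟨z, rfl, hz⟩ := (mem_quiverPolyhedron_and_isLatticePt_iff s t θ x).1 hx
    obtain ⟨m, n, rfl, hm, hn⟩ := exists_circulation_add_acyclic s t z
    obtain ⟨E, hnE, hE⟩ := exists_maximalAcyclic_superset s t hn
    have hnθ : ∀ v, flowMap s t ((↑) ∘ n) v = θ v := fun v => by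
      rw [← hz v, flowMap_natCast_add, hm v, zero_add]
    obtain ⟨hm₁, hm₂⟩ :=
      (mem_quiverPolyhedron_and_isLatticePt_iff s t (fun _ => 0) _).2 ⟨m, rfl, by simpa using hm⟩
    obtain ⟨hn₁, hn₂⟩ := (mem_quiverPolyhedron_and_isLatticePt_iff s t θ _).2 ⟨n, rfl, hnθ⟩
    refine ⟨_, _, E, hE, hm₁, hm₂, hn₁, hn₂, fun a ha => ?_, ?_⟩
    · simpa using mt (@hnE a) ha
    · ext a
      simp
  · rintro ⟨m, n, E, -, hm, hml, hn, hnl, -, rfl⟩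
    refine ⟨⟨fun a => add_nonneg (hm.1 a) (hn.1 a), fun v => ?_⟩, hml.add hnl⟩
    rw [flowMap_add, hm.2 v, hn.2 v, Int.cast_zero, zero_add]

/-- Minkowski sum decomposition of the lattice points of `∇(Q,θ)`. -/
theorem stmt1 {V A : Type} [Fintype V] [Fintype A] [DecidableEq V] (s t : A → V)
    (θ : V → ℤ) (x : A → ℝ) :
    (x ∈ quiverPolyhedron s t θ ∧ IsLatticePt x) ↔
    ∃ (m n : A → ℝ) (E : Set A), MaximalAcyclic s t E ∧
      m ∈ quiverPolyhedron s t (fun _ => 0) ∧ IsLatticePt m ∧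
      n ∈ quiverPolyhedron s t θ ∧ IsLatticePt n ∧ (∀ a ∉ E, n a = 0) ∧
      x = m + n :=
  stmt1_general s t θ x
end

section
/- Let Q be a quiver and θ ∈ ℤ^{Q0} a weight with ∇(Q,θ) nonempty. An arrow a ∈ Q1 is removable if and only if x(a) = 0 for all x ∈ ∇(Q,θ). -/
set_option linter.unusedSectionVars false

section aux

variable {V A : Type} [Fintype A] [DecidableEq V] [DecidableEq A]

/-- Restriction to the arrows different from `a`. -/
def restrictL (a : A) : (A → ℝ) →ₗ[ℝ] ({b : A // b ≠ a} → ℝ) where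
  toFun x := fun b => x b.1
  map_add' _ _ := rfl
  map_smul' _ _ := rfl

/-- Extension by zero at `a`. -/
def extendL (a : A) : ({b : A // b ≠ a} → ℝ) →ₗ[ℝ] (A → ℝ) where
  toFun y := fun c => if hc : c = a then 0 else y ⟨c, hc⟩
  map_add' x y := by
    funext c
    by_cases hc : c = a <;> simp [hc]
  map_smul' r x := by
    funext c
    by_cases hc : c = a <;> simp [hc]

lemma restrict_extend (a : A) (y : {b : A // b ≠ a} → ℝ) :
    restrictL a (extendL a y) = y := by
  funext b
  simp [restrictL, extendL, b.2]

lemma extend_apply_self (a : A) (y : {b : A // b ≠ a} → ℝ) :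
    extendL a y a = 0 := by simp [extendL]

lemma sum_split (a : A) (f : A → ℝ) :
    ∑ b : A, f b = f a + ∑ b : {b : A // b ≠ a}, f b.1 := by
  rw [← Finset.sum_subtype (Finset.univ.erase a) (fun x => by simp) f]
  rw [← Finset.add_sum_erase _ f (Finset.mem_univ a)]

lemma flow_split (s t : A → V) (a : A) (x : A → ℝ) (v : V) :
    flowMap s t x v =
      flowMap (fun b : {b : A // b ≠ a} => s b.1) (fun b => t b.1) (restrictL a x) v
        + ((if t a = v then x a else 0) - (if s a = v then x a else 0)) := by
  unfold flowMap
  rw [sum_split a (fun b => if t b = v then x b else 0),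
    sum_split a (fun b => if s b = v then x b else 0)]
  simp only [restrictL, LinearMap.coe_mk, AddHom.coe_mk]
  ring

lemma restrict_mem (s t : A → V) (θ : V → ℤ) (a : A) {x : A → ℝ}
    (hx : x ∈ quiverPolyhedron s t θ) (hxa : x a = 0) :
    restrictL a x ∈
      quiverPolyhedron (fun b : {b : A // b ≠ a} => s b.1) (fun b => t b.1) θ := by
  refine ⟨fun b => hx.1 b.1, fun v => ?_⟩
  have h := flow_split s t a x v
  rw [hx.2 v, hxa] at h
  simp at h
  linarith [h]

lemma extend_mem (s t : A → V) (θ : V → ℤ) (a : A) {y : {b : A // b ≠ a} → ℝ}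
    (hy : y ∈ quiverPolyhedron (fun b : {b : A // b ≠ a} => s b.1) (fun b => t b.1) θ) :
    extendL a y ∈ quiverPolyhedron s t θ := by
  constructor
  · intro c
    by_cases hc : c = a
    · simp [extendL, hc]
    · simpa [extendL, hc] using hy.1 ⟨c, hc⟩
  · intro v
    have h := flow_split s t a (extendL a y) v
    rw [restrict_extend, extend_apply_self] at h
    rw [h, hy.2 v]
    simp

end aux
/-- an arrow is removable iff the corresponding coordinate vanishes on
the whole quiver polyhedron. -/
theorem stmt3 {V A : Type} [Fintype V] [Fintype A] [DecidableEq V] [DecidableEq A]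
    (s t : A → V) (θ : V → ℤ) (hne : (quiverPolyhedron s t θ).Nonempty) (a : A) :
    Removable s t θ a ↔ ∀ x ∈ quiverPolyhedron s t θ, x a = 0 := by
  set P := quiverPolyhedron s t θ with hP
  set Q := quiverPolyhedron (fun b : {b : A // b ≠ a} => s b.1) (fun b => t b.1) θ with hQ
  constructor
  · rintro ⟨φ, ψ, hψφ, hφψ, hspan, hlat, himg⟩ x hxP
    by_contra hxa
    set g : (A → ℝ) →ᵃ[ℝ] (A → ℝ) := (extendL a).toAffineMap.comp φ with hg
    have hg0 : ∀ z, g z a = 0 := fun z => extend_apply_self a (φ z)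
    set S := affineSpan ℝ P with hS
    have hgS : ∀ z ∈ S, g z ∈ S := by
      intro z hz
      refine affineSpan_induction (p := fun y => g y ∈ S) hz
        (fun u hu => ?_) (fun c u v w hu hv hw => ?_)
      · have h1 : φ u ∈ ⇑φ '' (quiverPolyhedron s t θ) := Set.mem_image_of_mem φ hu
        rw [himg] at h1
        exact subset_affineSpan ℝ _ (extend_mem s t θ a h1)
      · have hgc : g (c • (u -ᵥ v) +ᵥ w) = c • (g u -ᵥ g v) +ᵥ g w := by
          rw [AffineMap.map_vadd, LinearMap.map_smul, AffineMap.linearMap_vsub]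
        show g (c • (u -ᵥ v) +ᵥ w) ∈ S
        rw [hgc]
        exact AffineSubspace.smul_vsub_vadd_mem S c hu hv hw
    have hginj : ∀ u ∈ S, ∀ v ∈ S, g u = g v → u = v := by
      intro u hu v hv huv
      have h1 : restrictL a (g u) = restrictL a (g v) := by rw [huv]
      rw [hg] at h1
      simp only [AffineMap.comp_apply, LinearMap.coe_toAffineMap] at h1
      rw [restrict_extend, restrict_extend] at h1
      rw [← hψφ u hu, ← hψφ v hv, h1]
    have hxS : x ∈ S := subset_affineSpan ℝ P hxP
    have hgxS : g x ∈ S := hgS x hxS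
    set D := S.direction with hD
    have hmap : ∀ w : D, g.linear w.1 ∈ D := by
      intro w
      have h1 : (w.1 +ᵥ x) ∈ S := AffineSubspace.vadd_mem_of_mem_direction w.2 hxS
      have h2 : g (w.1 +ᵥ x) = g.linear w.1 +ᵥ g x := AffineMap.map_vadd g x w.1
      have h3 := AffineSubspace.vsub_mem_direction (hgS _ h1) hgxS
      rw [h2] at h3
      simpa using h3
    set L : D →ₗ[ℝ] D :=
      { toFun := fun w => ⟨g.linear w.1, hmap w⟩
        map_add' := fun u v => by ext; simp
        map_smul' := fun r u => by ext; simp } with hL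
    have hLinj : Function.Injective L := by
      intro u v huv
      have h1 : g.linear u.1 = g.linear v.1 := congrArg Subtype.val huv
      have h2 : g (u.1 +ᵥ x) = g (v.1 +ᵥ x) := by
        rw [AffineMap.map_vadd, AffineMap.map_vadd, h1]
      have h3 := hginj _ (AffineSubspace.vadd_mem_of_mem_direction u.2 hxS)
        _ (AffineSubspace.vadd_mem_of_mem_direction v.2 hxS) h2
      ext1
      exact vadd_right_cancel x h3
    have hLsurj : Function.Surjective L := (LinearMap.injective_iff_surjective).mp hLinj
    have hxd : x -ᵥ g x ∈ D := AffineSubspace.vsub_mem_direction hxS hgxS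
    obtain ⟨w, hw⟩ := hLsurj ⟨x -ᵥ g x, hxd⟩
    have hw' : g.linear w.1 = x -ᵥ g x := congrArg Subtype.val hw
    have hgx : g (w.1 +ᵥ x) = x := by
      rw [AffineMap.map_vadd, hw']
      exact vsub_vadd x (g x)
    have h0 := hg0 (w.1 +ᵥ x)
    rw [hgx] at h0
    exact hxa h0
  · intro h0
    have hz : ∀ z ∈ affineSpan ℝ P, z a = 0 := by
      intro z hz
      refine affineSpan_induction (p := fun y => y a = 0) hz
        (fun u hu => h0 u hu) (fun c u v w hu hv hw => ?_)
      show (c • (u -ᵥ v) +ᵥ w) a = 0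
      have : (c • (u -ᵥ v) +ᵥ w) a = c * (u a - v a) + w a := rfl
      rw [this, hu, hv, hw]
      ring
    have hid1 : ∀ x ∈ affineSpan ℝ P, extendL a (restrictL a x) = x := by
      intro x hx
      funext c
      by_cases hc : c = a
      · subst hc
        rw [extend_apply_self, hz x hx]
      · simp [extendL, restrictL, hc]
    have himg : (restrictL a : (A → ℝ) → _) '' P = Q := by
      apply Set.eq_of_subset_of_subset
      · rintro _ ⟨x, hx, rfl⟩
        exact restrict_mem s t θ a hx (h0 x hx)
      · intro y hy
        exact ⟨extendL a y, extend_mem s t θ a hy, restrict_extend a y⟩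
    have hspan : (restrictL a).toAffineMap '' (affineSpan ℝ P : Set (A → ℝ)) =
        (affineSpan ℝ Q : Set ({b : A // b ≠ a} → ℝ)) := by
      rw [← AffineSubspace.coe_map, AffineSubspace.map_span, ← himg]
      rfl
    refine ⟨(restrictL a).toAffineMap, (extendL a).toAffineMap, ?_, ?_, hspan, ?_, ?_⟩
    · intro x hx
      exact hid1 x hx
    · intro y _
      exact restrict_extend a y
    · apply Set.eq_of_subset_of_subset
      · rintro _ ⟨x, ⟨hxS, hxL⟩, rfl⟩
        constructor
        · rw [← hspan]; exact Set.mem_image_of_mem _ hxS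
        · exact fun b => hxL b.1
      · rintro y ⟨hyS, hyL⟩
        have : y ∈ (restrictL a).toAffineMap '' (affineSpan ℝ P : Set (A → ℝ)) :=
          hspan ▸ hyS
        obtain ⟨x, hxS, rfl⟩ := this
        refine ⟨x, ⟨hxS, ?_⟩, rfl⟩
        intro c
        by_cases hc : c = a
        · subst hc
          exact ⟨0, by rw [hz x hxS]; simp⟩
        · have : x c = restrictL a x ⟨c, hc⟩ := rfl
          rw [this]
          exact hyL ⟨c, hc⟩
    · exact himg
end

section
/- Let Q be a quiver and θ ∈ ℤ^{Q0} a weight such that the pair (Q,θ) is tight. Then the dimension of the affine span of ∇(Q,θ) equals χ(Q) = |Q1| − |Q0| + c(Q), where c(Q) is the number of connected components of the underlying undirected graph of Q. -/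
/-- The underlying undirected (simple) graph of a quiver: two distinct vertices are
adjacent iff some arrow joins them. -/
def underlyingGraph {V A : Type} (s t : A → V) : SimpleGraph V :=
  SimpleGraph.fromRel (fun v w => ∃ a : A, s a = v ∧ t a = w)

/-!
If every point of `∇(Q,θ)` vanished on an arrow `a`, restriction to the other arrows would be an
integral-affine equivalence with the polyhedron of `Q` minus `a`. So tightness gives, for each
arrow, a point of `∇(Q,θ)` that is positive on it, and averaging them gives a point with all
coordinates positive. Around such a point `∇(Q,θ)` fills a neighbourhood in the fibre `F⁻¹(θ)`,
so the direction of its affine span is `ker F`. By rank–nullity and `rank F = rank Fᵀ` it remains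
to see that `ker Fᵀ` has dimension `c(Q)`: `Fᵀ` sends `y ∈ ℝ^{Q0}` to `a ↦ y(a⁺) - y(a⁻)`, so its
kernel consists of the functions constant along edges of the underlying graph, which is the kernel
of that graph's Laplacian.
-/

section StandardForm

open Filter Topology

variable {A W : Type*} [AddCommGroup W] [Module ℝ W]

theorem exists_ne_zero_forall_pos_add_smul [Finite A] {x₀ : A → ℝ} (hpos : ∀ a, 0 < x₀ a)
    (d : A → ℝ) : ∃ δ : ℝ, δ ≠ 0 ∧ ∀ a, 0 < x₀ a + δ * d a := by
  have hopen : IsOpen {x : A → ℝ | ∀ a, 0 < x a} := by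
    simpa only [Set.ofPred_forall] using
      isOpen_iInter_of_finite fun a => isOpen_lt continuous_const (continuous_apply a)
  have hline : Tendsto (fun δ : ℝ => x₀ + δ • d) (𝓝 0) (𝓝 x₀) := by
    have hcont : Continuous fun δ : ℝ => x₀ + δ • d := by fun_prop
    simpa using hcont.tendsto 0
  obtain ⟨δ, hδ, hδ0⟩ := ((hline.eventually (hopen.mem_nhds hpos)).filter_mono
    nhdsWithin_le_nhds |>.and (self_mem_nhdsWithin (s := {0}ᶜ))).exists
  exact ⟨δ, hδ0, fun a => by simpa using hδ a⟩

theorem direction_affineSpan_eq_ker_of_forall_pos [Finite A] (f : (A → ℝ) →ₗ[ℝ] W) {b : W}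
    {x₀ : A → ℝ} (hx₀ : f x₀ = b) (hpos : ∀ a, 0 < x₀ a) :
    (affineSpan ℝ {x : A → ℝ | (∀ a, 0 ≤ x a) ∧ f x = b}).direction = LinearMap.ker f := by
  set P := {x : A → ℝ | (∀ a, 0 ≤ x a) ∧ f x = b}
  have hx₀P : x₀ ∈ P := ⟨fun a => (hpos a).le, hx₀⟩
  apply le_antisymm
  · have hspan : affineSpan ℝ P ≤ AffineSubspace.mk' x₀ (LinearMap.ker f) := by
      refine affineSpan_le.mpr fun x hx => ?_
      simp [AffineSubspace.mem_mk', hx.2, hx₀]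
    simpa using AffineSubspace.direction_le hspan
  · intro d hd
    obtain ⟨δ, hδ0, hδ⟩ := exists_ne_zero_forall_pos_add_smul hpos d
    have hmem : x₀ + δ • d ∈ P := ⟨fun a => (hδ a).le, by simp [hx₀, LinearMap.mem_ker.mp hd]⟩
    have hdir := AffineSubspace.vsub_mem_direction (subset_affineSpan ℝ P hmem)
      (subset_affineSpan ℝ P hx₀P)
    rwa [vsub_eq_sub, add_sub_cancel_left, Submodule.smul_mem_iff _ hδ0] at hdir

theorem Convex.exists_forall_pos [Fintype A] {s : Set (A → ℝ)} (hs : Convex ℝ s)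
    (hnonneg : ∀ x ∈ s, ∀ a, 0 ≤ x a) (hne : s.Nonempty) (h : ∀ a, ∃ x ∈ s, 0 < x a) :
    ∃ x ∈ s, ∀ a, 0 < x a := by
  cases isEmpty_or_nonempty A
  · obtain ⟨x, hx⟩ := hne
    exact ⟨x, hx, isEmptyElim⟩
  choose w hw hwpos using h
  refine ⟨Finset.univ.centerMass (fun _ => 1) w,
    hs.centerMass_mem (by simp) (by simp [Fintype.card_pos]) fun a _ => hw a, fun b => ?_⟩
  have hsum : 0 < ∑ a, w a b :=
    Finset.sum_pos' (fun a _ => hnonneg _ (hw a) b) ⟨b, Finset.mem_univ b, hwpos b⟩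
  simp only [Finset.centerMass, Pi.smul_apply, Finset.sum_apply, one_smul, smul_eq_mul]
  positivity

end StandardForm

theorem integralAffinelyEquivalent_of_inverse_on_affineSpan {A B : Type}
    {P : Set (A → ℝ)} {Q : Set (B → ℝ)} (φ : (A → ℝ) →ᵃ[ℝ] (B → ℝ))
    (ψ : (B → ℝ) →ᵃ[ℝ] (A → ℝ)) (hψφ : ∀ x ∈ affineSpan ℝ P, ψ (φ x) = x)
    (hφψ : ∀ y ∈ affineSpan ℝ Q, φ (ψ y) = y) (hφ : ∀ x, IsLatticePt x → IsLatticePt (φ x))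
    (hψ : ∀ y, IsLatticePt y → IsLatticePt (ψ y)) (himage : φ '' P = Q) :
    IntegralAffinelyEquivalent P Q := by
  have hspan : φ '' (affineSpan ℝ P : Set (A → ℝ)) = affineSpan ℝ Q := by
    rw [← AffineSubspace.coe_map, AffineSubspace.map_span, himage]
  refine ⟨φ, ψ, hψφ, hφψ, hspan, subset_antisymm ?_ ?_, himage⟩
  · rintro _ ⟨x, ⟨hx, hxL⟩, rfl⟩
    exact ⟨hspan ▸ Set.mem_image_of_mem φ hx, hφ x hxL⟩
  · rintro y ⟨hy, hyL⟩
    rw [← hspan] at hy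
    obtain ⟨x, hx, rfl⟩ := hy
    exact ⟨x, ⟨hx, hψφ x hx ▸ hψ _ hyL⟩, rfl⟩

section Incidence

open Matrix

variable {V A : Type} [DecidableEq V] (s t : A → V)

def flowMatrix : Matrix V A ℝ :=
  Matrix.of fun v a => (if t a = v then 1 else 0) - (if s a = v then 1 else 0)

theorem flowMatrix_mulVec [Fintype A] (x : A → ℝ) : flowMatrix s t *ᵥ x = flowMap s t x := by
  funext v
  simp [flowMatrix, flowMap, Matrix.mulVec, dotProduct, sub_mul, Finset.sum_sub_distrib]

theorem flowMatrix_transpose_mulVec [Fintype V] (y : V → ℝ) (a : A) :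
    ((flowMatrix s t)ᵀ *ᵥ y) a = y (t a) - y (s a) := by
  simp [flowMatrix, Matrix.mulVec, dotProduct, sub_mul, Finset.sum_sub_distrib]

theorem ker_flowMatrix_transpose [Fintype V] [Fintype A] [DecidableRel (underlyingGraph s t).Adj] :
    LinearMap.ker (flowMatrix s t)ᵀ.mulVecLin
      = LinearMap.ker ((underlyingGraph s t).lapMatrix ℝ).toLin' := by
  ext y
  rw [LinearMap.mem_ker, LinearMap.mem_ker, Matrix.mulVecLin_apply, Matrix.toLin'_apply,
    SimpleGraph.lapMatrix_mulVec_eq_zero_iff_forall_adj, funext_iff]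
  simp only [flowMatrix_transpose_mulVec, Pi.zero_apply, sub_eq_zero]
  constructor
  · rintro h v w ⟨-, ⟨a, rfl, rfl⟩ | ⟨a, rfl, rfl⟩⟩
    exacts [(h a).symm, h a]
  · intro h a
    by_cases hloop : s a = t a
    · rw [hloop]
    · exact (h _ _ ⟨hloop, Or.inl ⟨a, rfl, rfl⟩⟩).symm

theorem finrank_ker_flowMatrix [Fintype V] [Fintype A] :
    Module.finrank ℝ (LinearMap.ker (flowMatrix s t).mulVecLin) + Fintype.card V
      = Fintype.card A + Nat.card (underlyingGraph s t).ConnectedComponent := by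
  classical
  have hA := LinearMap.finrank_range_add_finrank_ker (flowMatrix s t).mulVecLin
  have hV := LinearMap.finrank_range_add_finrank_ker (flowMatrix s t)ᵀ.mulVecLin
  have hrank := Matrix.rank_transpose (flowMatrix s t)
  rw [ker_flowMatrix_transpose,
    ← SimpleGraph.card_connectedComponent_eq_finrank_ker_toLin'_lapMatrix] at hV
  rw [Module.finrank_fintype_fun_eq_card] at hA hV
  rw [Nat.card_eq_fintype_card]
  unfold Matrix.rank at hrank
  omega

end Incidence

section Polyhedron

variable {V A : Type} [Fintype A] [DecidableEq V] (s t : A → V) (θ : V → ℤ)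

theorem quiverPolyhedron_eq :
    quiverPolyhedron s t θ
      = {x | (∀ a, 0 ≤ x a) ∧ (flowMatrix s t).mulVecLin x = fun v => (θ v : ℝ)} := by
  ext x
  simp [quiverPolyhedron, flowMatrix_mulVec, funext_iff]

theorem convex_quiverPolyhedron : Convex ℝ (quiverPolyhedron s t θ) := by
  rw [quiverPolyhedron_eq]
  intro x hx y hy α β hα hβ hαβ
  refine ⟨fun a => ?_, ?_⟩
  · simpa using add_nonneg (mul_nonneg hα (hx.1 a)) (mul_nonneg hβ (hy.1 a))
  · simp only [map_add, map_smul, hx.2, hy.2, ← add_smul, hαβ, one_smul]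

end Polyhedron

theorem extend_subtype_ne_apply_self {A : Type} (a : A) (y : {b // b ≠ a} → ℝ) :
    Function.extend Subtype.val y 0 a = 0 :=
  Function.extend_apply' _ _ _ fun ⟨b, hb⟩ => b.2 hb

theorem extend_subtype_ne_comp {A : Type} (a : A) {x : A → ℝ} (hx : x a = 0) :
    Function.extend (Subtype.val : {b // b ≠ a} → A) (x ∘ Subtype.val) 0 = x := by
  funext b
  by_cases hb : b = a
  · rw [hb, extend_subtype_ne_apply_self, hx]
  · exact Subtype.val_injective.extend_apply _ _ ⟨b, hb⟩

section Removal

variable {V A : Type} [Fintype A] [DecidableEq V] [DecidableEq A] (s t : A → V) (θ : V → ℤ)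
  (a : A)

theorem flowMap_extend_subtype_ne (y : {b // b ≠ a} → ℝ) :
    flowMap s t (Function.extend Subtype.val y 0)
      = flowMap (fun b : {b // b ≠ a} => s b) (fun b => t b) y := by
  funext v
  simp only [flowMap, Fintype.sum_eq_add_sum_subtype_ne _ a, extend_subtype_ne_apply_self,
    Subtype.val_injective.extend_apply, ite_self, zero_add]

theorem removable_of_forall_eq_zero (hzero : ∀ x ∈ quiverPolyhedron s t θ, x a = 0) :
    Removable s t θ a := by
  let φ := (LinearMap.funLeft ℝ ℝ (Subtype.val : {b // b ≠ a} → A)).toAffineMap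
  let ψ := (Function.ExtendByZero.linearMap ℝ (Subtype.val : {b // b ≠ a} → A)).toAffineMap
  have hψφ : ∀ x : A → ℝ, x a = 0 → ψ (φ x) = x := fun x => extend_subtype_ne_comp a
  have hφψ : ∀ y, φ (ψ y) = y := fun y => funext (Subtype.val_injective.extend_apply y 0)
  have hspan : affineSpan ℝ (quiverPolyhedron s t θ)
      ≤ (LinearMap.ker (LinearMap.proj (R := ℝ) (φ := fun _ : A => ℝ) a)).toAffineSubspace :=
    affineSpan_le.mpr hzero
  refine integralAffinelyEquivalent_of_inverse_on_affineSpan φ ψ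
    (fun x hx => hψφ x (hspan hx)) (fun y _ => hφψ y) (fun x hx b => hx b) (fun y hy b => ?_) ?_
  · by_cases hb : b = a
    · exact ⟨0, by simp [ψ, hb]⟩
    · simpa [ψ, Subtype.val_injective.extend_apply y 0 ⟨b, hb⟩] using hy ⟨b, hb⟩
  ext y
  constructor
  · rintro ⟨x, hx, rfl⟩
    refine ⟨fun b => hx.1 b, fun v => ?_⟩
    rw [← flowMap_extend_subtype_ne]
    exact (congrFun (congrArg (flowMap s t) (hψφ x (hzero x hx))) v).trans (hx.2 v)
  · intro hy
    refine ⟨ψ y, ⟨fun b => ?_, fun v => ?_⟩, hφψ y⟩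
    · by_cases hb : b = a
      · simp [ψ, hb]
      · simpa [ψ, Subtype.val_injective.extend_apply y 0 ⟨b, hb⟩] using hy.1 ⟨b, hb⟩
    · exact (congrFun (flowMap_extend_subtype_ne s t a y) v).trans (hy.2 v)

end Removal

/-- if `(Q,θ)` is tight then `dim ∇(Q,θ) = χ(Q) = |Q1| - |Q0| + c(Q)`,
stated additively to avoid truncated subtraction. -/
theorem stmt5 {V A : Type} [Fintype V] [Fintype A] [DecidableEq V] [DecidableEq A]
    (s t : A → V) (θ : V → ℤ) (htight : Tight s t θ) :
    Module.finrank ℝ (affineSpan ℝ (quiverPolyhedron s t θ)).direction + Fintype.card V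
      = Fintype.card A + Nat.card (underlyingGraph s t).ConnectedComponent := by
  obtain ⟨hne, hnotRemovable, -⟩ := htight
  have hpos : ∀ a, ∃ x ∈ quiverPolyhedron s t θ, 0 < x a := by
    intro a
    by_contra! hzero
    exact hnotRemovable a <| removable_of_forall_eq_zero s t θ a fun x hx =>
      le_antisymm (hzero x hx) (hx.1 a)
  obtain ⟨x₀, hx₀, hx₀pos⟩ :=
    (convex_quiverPolyhedron s t θ).exists_forall_pos (fun x hx => hx.1) hne hpos
  rw [quiverPolyhedron_eq] at hx₀ ⊢
  rw [direction_affineSpan_eq_ker_of_forall_pos _ hx₀.2 hx₀pos]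
  exact finrank_ker_flowMatrix s t
end

section
/- Let Q be a quiver, θ ∈ ℤ^{Q0} a weight with ∇(Q,θ) nonempty, and let v ∈ Q0 be a vertex incident to exactly two arrows a, b of Q, with either a⁺ = b⁺ = v or a⁻ = b⁻ = v; let u be the other endpoint of a and w the other endpoint of b, and assume u, w, v are pairwise distinct. Let Q' be the quiver obtained from Q by replacing a and b with the reversed arrows â and b̂ (so that â connects u and v and b̂ connects w and v with reversed orientation), and define θ' ∈ ℤ^{Q'_0} (Q'_0 = Q0) by θ'(v) = −θ(v), θ'(u) = θ(u) + θ(v), θ'(w) = θ(w) + θ(v), and θ'(z) = θ(z) for all other vertices z. Then the polyhedra ∇(Q,θ) and ∇(Q',θ') are integral-affinely equivalent. -/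
noncomputable def revMap {A : Type} [DecidableEq A] (a b : A) (κ : ℝ) : (A → ℝ) →ᵃ[ℝ] (A → ℝ) where
  toFun x := fun c => if c = a ∨ c = b then κ - x c else x c
  linear :=
    { toFun := fun x c => if c = a ∨ c = b then -x c else x c
      map_add' := by intro x y; funext c; by_cases h : c = a ∨ c = b <;> simp [h] <;> ring
      map_smul' := by intro r x; funext c; by_cases h : c = a ∨ c = b <;> simp [h] <;> ring }
  map_vadd' := by
    intro p q; funext c
    by_cases h : c = a ∨ c = b <;> simp [h, Pi.add_apply] <;> ring

lemma revMap_apply {A : Type} [DecidableEq A] (a b : A) (κ : ℝ) (x : A → ℝ) (c : A) :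
    revMap a b κ x c = if c = a ∨ c = b then κ - x c else x c := rfl

lemma revMap_invol {A : Type} [DecidableEq A] (a b : A) (κ : ℝ) (x : A → ℝ) :
    revMap a b κ (revMap a b κ x) = x := by
  funext c
  simp only [revMap_apply]
  by_cases h : c = a ∨ c = b <;> simp [h]

lemma sum_eq_pair' {A : Type} [Fintype A] [DecidableEq A] (a b : A) (hab : a ≠ b)
    (f : A → ℝ) (h : ∀ c, c ≠ a → c ≠ b → f c = 0) :
    ∑ c, f c = f a + f b := by
  rw [← Finset.sum_pair hab]
  exact (Finset.sum_subset (Finset.subset_univ _) (fun c _ hc => by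
    simp only [Finset.mem_insert, Finset.mem_singleton, not_or] at hc
    exact h c hc.1 hc.2)).symm

lemma aux_mem {V A : Type} [Fintype A] [DecidableEq V] [DecidableEq A]
    (s t : A → V) (θ : V → ℤ)
    (v u w : V) (a b : A) (hab : a ≠ b)
    (huv : u ≠ v) (hwv : w ≠ v) (huw : u ≠ w)
    (hinc : ∀ c : A, (s c = v ∨ t c = v) → c = a ∨ c = b)
    (κ : ℝ)
    (hcase : (t a = v ∧ t b = v ∧ s a = u ∧ s b = w ∧ κ = (θ v : ℝ)) ∨
             (s a = v ∧ s b = v ∧ t a = u ∧ t b = w ∧ κ = -(θ v : ℝ)))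
    (x : A → ℝ) (hx : x ∈ quiverPolyhedron s t θ) :
    revMap a b κ x ∈ quiverPolyhedron
      (fun c : A => if c = a then t a else if c = b then t b else s c)
      (fun c : A => if c = a then s a else if c = b then s b else t c)
      (fun z : V => if z = v then -θ v else if z = u then θ u + θ v
                    else if z = w then θ w + θ v else θ z) := by
  obtain ⟨hpos, hflow⟩ := hx
  -- x a + x b = κ
  have hT : ∑ c, (if t c = v then x c else 0) =
      (if t a = v then x a else 0) + (if t b = v then x b else 0) := by
    refine sum_eq_pair' a b hab _ (fun c hca hcb => ?_)
    have : t c ≠ v := fun h => by rcases hinc c (Or.inr h) with h | h <;> [exact hca h; exact hcb h]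
    simp [this]
  have hS : ∑ c, (if s c = v then x c else 0) =
      (if s a = v then x a else 0) + (if s b = v then x b else 0) := by
    refine sum_eq_pair' a b hab _ (fun c hca hcb => ?_)
    have : s c ≠ v := fun h => by rcases hinc c (Or.inl h) with h | h <;> [exact hca h; exact hcb h]
    simp [this]
  have hfv := hflow v
  rw [flowMap, hT, hS] at hfv
  have hsum : x a + x b = κ := by
    rcases hcase with ⟨h1, h2, h3, h4, h5⟩ | ⟨h1, h2, h3, h4, h5⟩
    · rw [h1, h2, h3, h4] at hfv
      simp [huv, hwv] at hfv
      rw [h5]; linarith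
    · rw [h1, h2, h3, h4] at hfv
      simp [huv, hwv] at hfv
      rw [h5]; linarith
  constructor
  · intro c
    rw [revMap_apply]
    by_cases h : c = a ∨ c = b
    · rcases h with rfl | rfl <;> simp [hab, hab.symm] <;>
        [have := hpos b; have := hpos a] <;> linarith
    · simp [h]; exact hpos c
  · intro z
    have key : flowMap (fun c : A => if c = a then t a else if c = b then t b else s c)
        (fun c : A => if c = a then s a else if c = b then s b else t c) (revMap a b κ x) z
        - flowMap s t x z =
        ((if s a = z then κ else 0) + (if s b = z then κ else 0)
          - (if t a = z then κ else 0) - (if t b = z then κ else 0)) := by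
      have expand : flowMap (fun c : A => if c = a then t a else if c = b then t b else s c)
          (fun c : A => if c = a then s a else if c = b then s b else t c) (revMap a b κ x) z
          - flowMap s t x z =
          ∑ c, (((if (if c = a then s a else if c = b then s b else t c) = z
                  then revMap a b κ x c else 0)
              - (if (if c = a then t a else if c = b then t b else s c) = z
                  then revMap a b κ x c else 0))
            - ((if t c = z then x c else 0) - (if s c = z then x c else 0))) := by
        simp only [flowMap, Finset.sum_sub_distrib]
        try ring
      rw [expand, sum_eq_pair' a b hab _ (fun c hca hcb => by
        simp [hca, hcb, revMap_apply])]
      simp only [revMap_apply]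
      by_cases h1 : s a = z <;> by_cases h2 : t a = z <;> by_cases h3 : s b = z <;>
        by_cases h4 : t b = z <;> simp [hab, hab.symm, h1, h2, h3, h4] <;> try ring
    have hfz := hflow z
    have hkey2 : flowMap (fun c : A => if c = a then t a else if c = b then t b else s c)
        (fun c : A => if c = a then s a else if c = b then s b else t c) (revMap a b κ x) z
        = (θ z : ℝ) + ((if s a = z then κ else 0) + (if s b = z then κ else 0)
          - (if t a = z then κ else 0) - (if t b = z then κ else 0)) := by
      rw [← hfz]; linarith
    rw [hkey2]
    rcases hcase with ⟨h1, h2, h3, h4, h5⟩ | ⟨h1, h2, h3, h4, h5⟩ <;>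
    rw [h1, h2, h3, h4, h5] <;> clear hfz hkey2 hT hS hfv <;>
    [skip; skip] <;>
    (by_cases hzv : z = v
     · subst hzv
       simp [huv, hwv]
       try push_cast
       try ring
     · by_cases hzu : z = u
       · subst hzu
         simp [Ne.symm huw, Ne.symm huv, huv, hwv, huw]
         try push_cast
         try ring
       · by_cases hzw : z = w
         · subst hzw
           simp [huw, hwv, Ne.symm hwv, huw.symm, hwv.symm]
           try push_cast
           try ring
         · simp [Ne.symm hzv, Ne.symm hzu, Ne.symm hzw, hzv, hzu, hzw])

lemma main_aux {V A : Type} [Fintype A] [DecidableEq V] [DecidableEq A]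
    (s t : A → V) (θ : V → ℤ)
    (v u w : V) (a b : A) (hab : a ≠ b)
    (huv : u ≠ v) (hwv : w ≠ v) (huw : u ≠ w)
    (hinc : ∀ c : A, (s c = v ∨ t c = v) → c = a ∨ c = b)
    (κ : ℝ)
    (hcase : (t a = v ∧ t b = v ∧ s a = u ∧ s b = w ∧ κ = (θ v : ℝ)) ∨
             (s a = v ∧ s b = v ∧ t a = u ∧ t b = w ∧ κ = -(θ v : ℝ))) :
    IntegralAffinelyEquivalent (quiverPolyhedron s t θ)
      (quiverPolyhedron
        (fun c : A => if c = a then t a else if c = b then t b else s c)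
        (fun c : A => if c = a then s a else if c = b then s b else t c)
        (fun z : V => if z = v then -θ v else if z = u then θ u + θ v
                      else if z = w then θ w + θ v else θ z)) := by
  set s' : A → V := fun c : A => if c = a then t a else if c = b then t b else s c with hs'
  set t' : A → V := fun c : A => if c = a then s a else if c = b then s b else t c with ht'
  set θ' : V → ℤ := fun z : V => if z = v then -θ v else if z = u then θ u + θ v
                      else if z = w then θ w + θ v else θ z with hθ'
  have hinc' : ∀ c : A, (s' c = v ∨ t' c = v) → c = a ∨ c = b := by
    intro c hc
    by_cases hca : c = a
    · exact Or.inl hca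
    by_cases hcb : c = b
    · exact Or.inr hcb
    simp only [hs', ht', hca, hcb, if_false, ite_false] at hc
    exact hinc c hc
  have hcase' : (t' a = v ∧ t' b = v ∧ s' a = u ∧ s' b = w ∧ κ = (θ' v : ℝ)) ∨
      (s' a = v ∧ s' b = v ∧ t' a = u ∧ t' b = w ∧ κ = -(θ' v : ℝ)) := by
    have hθ'v : θ' v = -θ v := by simp [hθ']
    rcases hcase with ⟨h1, h2, h3, h4, h5⟩ | ⟨h1, h2, h3, h4, h5⟩
    · refine Or.inr ⟨?_, ?_, ?_, ?_, ?_⟩ <;>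
        simp [hs', ht', hab, hab.symm, h1, h2, h3, h4, h5, hθ'v]
    · refine Or.inl ⟨?_, ?_, ?_, ?_, ?_⟩ <;>
        simp [hs', ht', hab, hab.symm, h1, h2, h3, h4, h5, hθ'v]
  have hs'' : (fun c : A => if c = a then t' a else if c = b then t' b else s' c) = s := by
    funext c
    by_cases hca : c = a
    · subst hca; simp [hs', ht']
    by_cases hcb : c = b
    · subst hcb; simp [hs', ht', hab.symm]
    · simp [hs', hca, hcb]
  have ht'' : (fun c : A => if c = a then s' a else if c = b then s' b else t' c) = t := by
    funext c
    by_cases hca : c = a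
    · subst hca; simp [hs', ht']
    by_cases hcb : c = b
    · subst hcb; simp [hs', ht', hab.symm]
    · simp [ht', hca, hcb]
  have hθ'' : (fun z : V => if z = v then -θ' v else if z = u then θ' u + θ' v
      else if z = w then θ' w + θ' v else θ' z) = θ := by
    funext z
    by_cases hzv : z = v
    · subst hzv; simp [hθ']
    by_cases hzu : z = u
    · subst hzu; simp [hθ', huv, hzv]; try ring
    by_cases hzw : z = w
    · subst hzw; simp [hθ', hwv, huw.symm, hzv]; try ring
    · simp [hθ', hzv, hzu, hzw]
  have hfwd : ∀ x ∈ quiverPolyhedron s t θ, revMap a b κ x ∈ quiverPolyhedron s' t' θ' :=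
    fun x hx => aux_mem s t θ v u w a b hab huv hwv huw hinc κ hcase x hx
  have hback : ∀ y ∈ quiverPolyhedron s' t' θ', revMap a b κ y ∈ quiverPolyhedron s t θ := by
    intro y hy
    have := aux_mem s' t' θ' v u w a b hab huv hwv huw hinc' κ hcase' y hy
    rwa [hs'', ht'', hθ''] at this
  have himg : revMap a b κ '' quiverPolyhedron s t θ = quiverPolyhedron s' t' θ' := by
    apply Set.Subset.antisymm
    · rintro _ ⟨x, hx, rfl⟩; exact hfwd x hx
    · intro y hy; exact ⟨revMap a b κ y, hback y hy, revMap_invol a b κ y⟩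
  have hinj : Function.Injective (revMap a b κ) :=
    Function.LeftInverse.injective (revMap_invol a b κ)
  have hκ : ∃ m : ℤ, κ = (m : ℝ) := by
    rcases hcase with ⟨_, _, _, _, h5⟩ | ⟨_, _, _, _, h5⟩
    · exact ⟨θ v, h5⟩
    · exact ⟨-θ v, by rw [h5]; push_cast; ring⟩
  have hlat : revMap a b κ '' {x : A → ℝ | IsLatticePt x} = {x : A → ℝ | IsLatticePt x} := by
    obtain ⟨m, hm⟩ := hκ
    have hpres : ∀ x : A → ℝ, IsLatticePt x → IsLatticePt (revMap a b κ x) := by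
      intro x hx c
      obtain ⟨z, hz⟩ := hx c
      rw [revMap_apply]
      by_cases h : c = a ∨ c = b
      · exact ⟨m - z, by rw [if_pos h, hm, hz]; push_cast; ring⟩
      · exact ⟨z, by rw [if_neg h, hz]⟩
    apply Set.Subset.antisymm
    · rintro _ ⟨x, hx, rfl⟩; exact hpres x hx
    · intro y hy; exact ⟨revMap a b κ y, hpres y hy, revMap_invol a b κ y⟩
  have hspan : revMap a b κ '' (affineSpan ℝ (quiverPolyhedron s t θ) : Set (A → ℝ)) =
      (affineSpan ℝ (quiverPolyhedron s' t' θ') : Set (A → ℝ)) := by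
    rw [← AffineSubspace.coe_map, AffineSubspace.map_span, himg]
  refine ⟨revMap a b κ, revMap a b κ, fun x _ => revMap_invol a b κ x,
    fun y _ => revMap_invol a b κ y, hspan, ?_, himg⟩
  rw [Set.image_inter hinj, hspan, hlat]

/-- reversing the two arrows at a valency-two vertex `v` which is a sink
or a source of both of them, and adjusting the weight accordingly, preserves the
quiver polyhedron up to integral-affine equivalence. -/
theorem stmt7 {V A : Type} [Fintype V] [Fintype A] [DecidableEq V] [DecidableEq A]
    (s t : A → V) (θ : V → ℤ) (hne : (quiverPolyhedron s t θ).Nonempty)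
    (v u w : V) (a b : A) (hab : a ≠ b)
    (huv : u ≠ v) (hwv : w ≠ v) (huw : u ≠ w)
    (hinc : ∀ c : A, (s c = v ∨ t c = v) → c = a ∨ c = b)
    (hcase : (t a = v ∧ t b = v ∧ s a = u ∧ s b = w) ∨
             (s a = v ∧ s b = v ∧ t a = u ∧ t b = w)) :
    IntegralAffinelyEquivalent (quiverPolyhedron s t θ)
      (quiverPolyhedron
        (fun c : A => if c = a then t a else if c = b then t b else s c)
        (fun c : A => if c = a then s a else if c = b then s b else t c)
        (fun z : V => if z = v then -θ v else if z = u then θ u + θ v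
                      else if z = w then θ w + θ v else θ z)) := by
  rcases hcase with ⟨h1, h2, h3, h4⟩ | ⟨h1, h2, h3, h4⟩
  · exact main_aux s t θ v u w a b hab huv hwv huw hinc ((θ v : ℝ))
      (Or.inl ⟨h1, h2, h3, h4, rfl⟩)
  · exact main_aux s t θ v u w a b hab huv hwv huw hinc (-(θ v : ℝ))
      (Or.inr ⟨h1, h2, h3, h4, rfl⟩)
end

section
/- Let Q be a quiver that is the union of two full subquivers Q' and Q'' which are either disjoint or have exactly one common vertex v (and no common arrow), and identify ℝ^{Q1} = ℝ^{Q'_1} ⊕ ℝ^{Q''_1}. (a) If Q'_0 and Q''_0 are disjoint, then for any weight θ ∈ ℤ^{Q0}, under the identification above, ∇(Q,θ) is the product ∇(Q', θ|_{Q'_0}) × ∇(Q'', θ|_{Q''_0}). (b) If Q'_0 ∩ Q''_0 = {v} and Σ_{w ∈ Q0} θ(w) = 0, define θ' ∈ ℤ^{Q'_0} by θ'(w) = θ(w) for w ∈ Q'_0 \ {v} and θ'(v) = −Σ_{w ∈ Q'_0 \ {v}} θ(w), and θ'' ∈ ℤ^{Q''_0} analogously; then θ = θ' + θ'' (extending by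 zero) and ∇(Q,θ) is the product ∇(Q',θ') × ∇(Q'',θ''). -/
section aux
variable {V A : Type} [Fintype A] [DecidableEq V]

/-- flow of the subquiver on arrows satisfying `P`, with vertex type `V`. -/
def pflow (s t : A → V) (P : A → Prop) [DecidablePred P] (x : A → ℝ) (z : V) : ℝ :=
  (∑ a : A, if P a ∧ t a = z then x a else 0) - (∑ a : A, if P a ∧ s a = z then x a else 0)

lemma sum_subtype_eq (P : A → Prop) [DecidablePred P] (f : A → V) (x : A → ℝ) (z : V) :
    (∑ b : {a // P a}, if f b.1 = z then x b.1 else 0)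
      = ∑ a : A, if P a ∧ f a = z then x a else 0 := by
  rw [← Finset.sum_subtype (Finset.univ.filter P) (by simp)
      (fun a => if f a = z then x a else 0)]
  rw [Finset.sum_filter]
  simp [ite_and]

lemma sub_flow (s t : A → V) (V0 : Finset V) (x : A → ℝ) (z : V) (hz : z ∈ V0) :
    flowMap (fun a : {a : A // s a ∈ V0 ∧ t a ∈ V0} => (⟨s a.1, a.2.1⟩ : {z : V // z ∈ V0}))
      (fun a => ⟨t a.1, a.2.2⟩) (fun a => x a.1) ⟨z, hz⟩
      = pflow s t (fun a => s a ∈ V0 ∧ t a ∈ V0) x z := by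
  unfold flowMap pflow
  simp only [Subtype.mk.injEq]
  rw [sum_subtype_eq, sum_subtype_eq]

lemma pflow_zero (s t : A → V) (V0 : Finset V) (x : A → ℝ) (z : V) (hz : z ∉ V0) :
    pflow s t (fun a => s a ∈ V0 ∧ t a ∈ V0) x z = 0 := by
  unfold pflow
  rw [Finset.sum_eq_zero, Finset.sum_eq_zero, sub_zero]
  · intro a _
    split_ifs with h
    · exact absurd (h.2 ▸ h.1.1) hz
    · rfl
  · intro a _
    split_ifs with h
    · exact absurd (h.2 ▸ h.1.2) hz
    · rfl

lemma sum_pflow_univ [Fintype V] (s t : A → V) (P : A → Prop) [DecidablePred P] (x : A → ℝ) :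
    ∑ z : V, pflow s t P x z = 0 := by
  have h : ∀ f : A → V, (∑ z : V, ∑ a : A, if P a ∧ f a = z then x a else 0)
      = ∑ a : A, if P a then x a else 0 := by
    intro f
    rw [Finset.sum_comm]
    refine Finset.sum_congr rfl fun a _ => ?_
    simp [ite_and, Finset.sum_ite_eq]
  unfold pflow
  rw [Finset.sum_sub_distrib, h t, h s, sub_self]

lemma sum_pflow (s t : A → V) [Fintype V] (V0 : Finset V) (x : A → ℝ) :
    ∑ z ∈ V0, pflow s t (fun a => s a ∈ V0 ∧ t a ∈ V0) x z = 0 := by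
  rw [Finset.sum_subset (Finset.subset_univ V0)
    (fun z _ hz => pflow_zero s t V0 x z hz)]
  exact sum_pflow_univ s t _ x

lemma flow_split_s8 [Fintype V] (s t : A → V) (V0 V1 : Finset V)
    (harrows : ∀ a : A, (s a ∈ V0 ∧ t a ∈ V0) ∨ (s a ∈ V1 ∧ t a ∈ V1))
    (hdisjarr : ¬ ∃ a : A, (s a ∈ V0 ∧ t a ∈ V0) ∧ (s a ∈ V1 ∧ t a ∈ V1))
    (x : A → ℝ) (z : V) :
    flowMap s t x z = pflow s t (fun a => s a ∈ V0 ∧ t a ∈ V0) x z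
      + pflow s t (fun a => s a ∈ V1 ∧ t a ∈ V1) x z := by
  have hd : ∀ a : A, (s a ∈ V0 ∧ t a ∈ V0) → ¬(s a ∈ V1 ∧ t a ∈ V1) :=
    fun a h h' => hdisjarr ⟨a, h, h'⟩
  unfold flowMap pflow
  have h1 : ∀ f : A → V, (∑ a : A, if f a = z then x a else 0)
      = (∑ a : A, if (s a ∈ V0 ∧ t a ∈ V0) ∧ f a = z then x a else 0)
      + (∑ a : A, if (s a ∈ V1 ∧ t a ∈ V1) ∧ f a = z then x a else 0) := by
    intro f
    rw [← Finset.sum_add_distrib]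
    refine Finset.sum_congr rfl fun a _ => ?_
    by_cases hf : f a = z
    · rcases harrows a with h | h
      · simp [h, hf, hd a h]
      · have h' : ¬ (s a ∈ V0 ∧ t a ∈ V0) := fun h'' => hd a h'' h
        simp [h, hf, h']
    · simp [hf]
  rw [h1 t, h1 s]
  ring

end aux

/-- if `Q` is the union of two full subquivers (on vertex sets `V0`, `V1`)
which are disjoint or share exactly one vertex `v` (and share no arrow), then
`∇(Q,θ)` is the product of the corresponding quiver polyhedra. -/
theorem stmt8 {V A : Type} [Fintype V] [Fintype A] [DecidableEq V] [DecidableEq A]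
    (s t : A → V) (V0 V1 : Finset V)
    (hcover : V0 ∪ V1 = Finset.univ)
    (harrows : ∀ a : A, (s a ∈ V0 ∧ t a ∈ V0) ∨ (s a ∈ V1 ∧ t a ∈ V1))
    (hdisjarr : ¬ ∃ a : A, (s a ∈ V0 ∧ t a ∈ V0) ∧ (s a ∈ V1 ∧ t a ∈ V1)) :
    -- (a) the disjoint case
    (V0 ∩ V1 = ∅ → ∀ (θ : V → ℤ) (x : A → ℝ),
      x ∈ quiverPolyhedron s t θ ↔
        ((fun a : {a : A // s a ∈ V0 ∧ t a ∈ V0} => x a.1) ∈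
            quiverPolyhedron
              (fun a : {a : A // s a ∈ V0 ∧ t a ∈ V0} => (⟨s a.1, a.2.1⟩ : {z : V // z ∈ V0}))
              (fun a => (⟨t a.1, a.2.2⟩ : {z : V // z ∈ V0}))
              (fun z : {z : V // z ∈ V0} => θ z.1) ∧
         (fun a : {a : A // s a ∈ V1 ∧ t a ∈ V1} => x a.1) ∈
            quiverPolyhedron
              (fun a : {a : A // s a ∈ V1 ∧ t a ∈ V1} => (⟨s a.1, a.2.1⟩ : {z : V // z ∈ V1}))
              (fun a => (⟨t a.1, a.2.2⟩ : {z : V // z ∈ V1}))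
              (fun z : {z : V // z ∈ V1} => θ z.1))) ∧
    -- (b) the case of one common vertex `v`
    (∀ v : V, V0 ∩ V1 = {v} → ∀ θ : V → ℤ, (∑ z : V, θ z) = 0 →
      ((∀ z : V, θ z =
          (if z ∈ V0 then (if z = v then -∑ y ∈ V0.erase v, θ y else θ z) else 0) +
          (if z ∈ V1 then (if z = v then -∑ y ∈ V1.erase v, θ y else θ z) else 0)) ∧
       ∀ x : A → ℝ,
        x ∈ quiverPolyhedron s t θ ↔
          ((fun a : {a : A // s a ∈ V0 ∧ t a ∈ V0} => x a.1) ∈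
              quiverPolyhedron
                (fun a : {a : A // s a ∈ V0 ∧ t a ∈ V0} => (⟨s a.1, a.2.1⟩ : {z : V // z ∈ V0}))
                (fun a => (⟨t a.1, a.2.2⟩ : {z : V // z ∈ V0}))
                (fun z : {z : V // z ∈ V0} =>
                  if z.1 = v then -∑ y ∈ V0.erase v, θ y else θ z.1) ∧
           (fun a : {a : A // s a ∈ V1 ∧ t a ∈ V1} => x a.1) ∈
              quiverPolyhedron
                (fun a : {a : A // s a ∈ V1 ∧ t a ∈ V1} => (⟨s a.1, a.2.1⟩ : {z : V // z ∈ V1}))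
                (fun a => (⟨t a.1, a.2.2⟩ : {z : V // z ∈ V1}))
                (fun z : {z : V // z ∈ V1} =>
                  if z.1 = v then -∑ y ∈ V1.erase v, θ y else θ z.1)))) := by
  classical
  constructor
  · -- (a) disjoint case
    intro hdisj θ x
    have hmem : ∀ z : V, z ∈ V0 → z ∉ V1 := by
      intro z h0 h1
      have hz : z ∈ V0 ∩ V1 := Finset.mem_inter.2 ⟨h0, h1⟩
      rw [hdisj] at hz
      exact absurd hz (Finset.notMem_empty z)
    constructor
    · rintro ⟨hx, hf⟩
      refine ⟨⟨fun a => hx a.1, ?_⟩, ⟨fun a => hx a.1, ?_⟩⟩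
      · rintro ⟨z, hz⟩
        rw [sub_flow s t V0 x z hz]
        have h1 := flow_split_s8 s t V0 V1 harrows hdisjarr x z
        have h2 := pflow_zero s t V1 x z (hmem z hz)
        have h3 := hf z
        rw [h1, h2] at h3
        simpa using h3
      · rintro ⟨z, hz⟩
        rw [sub_flow s t V1 x z hz]
        have h1 := flow_split_s8 s t V0 V1 harrows hdisjarr x z
        have h2 : pflow s t (fun a => s a ∈ V0 ∧ t a ∈ V0) x z = 0 := by
          apply pflow_zero
          intro h0
          exact hmem z h0 hz
        have h3 := hf z
        rw [h1, h2] at h3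
        simpa using h3
    · rintro ⟨⟨hx0, hf0⟩, ⟨hx1, hf1⟩⟩
      constructor
      · intro a
        rcases harrows a with h | h
        · exact hx0 ⟨a, h⟩
        · exact hx1 ⟨a, h⟩
      · intro z
        rw [flow_split_s8 s t V0 V1 harrows hdisjarr x z]
        by_cases hz0 : z ∈ V0
        · have h2 := pflow_zero s t V1 x z (hmem z hz0)
          have h3 := hf0 ⟨z, hz0⟩
          rw [sub_flow s t V0 x z hz0] at h3
          rw [h2, h3]
          simp
        · have hz1 : z ∈ V1 := by
            have : z ∈ V0 ∪ V1 := by rw [hcover]; exact Finset.mem_univ z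
            rcases Finset.mem_union.1 this with h | h
            · exact absurd h hz0
            · exact h
          have h2 := pflow_zero s t V0 x z hz0
          have h3 := hf1 ⟨z, hz1⟩
          rw [sub_flow s t V1 x z hz1] at h3
          rw [h2, h3]
          simp
  · -- (b) one common vertex
    intro v hv θ hsum
    have hv0 : v ∈ V0 := by
      have : v ∈ V0 ∩ V1 := by rw [hv]; exact Finset.mem_singleton_self v
      exact (Finset.mem_inter.1 this).1
    have hv1 : v ∈ V1 := by
      have : v ∈ V0 ∩ V1 := by rw [hv]; exact Finset.mem_singleton_self v
      exact (Finset.mem_inter.1 this).2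
    have hkey : ∀ z : V, z ∈ V0 → z ∈ V1 → z = v := by
      intro z h0 h1
      have : z ∈ V0 ∩ V1 := Finset.mem_inter.2 ⟨h0, h1⟩
      rw [hv] at this
      exact Finset.mem_singleton.1 this
    have hθv : θ v = -(∑ y ∈ V0.erase v, θ y) + -(∑ y ∈ V1.erase v, θ y) := by
      have h1 : ∑ z ∈ V0 ∪ V1, θ z + ∑ z ∈ V0 ∩ V1, θ z
          = ∑ z ∈ V0, θ z + ∑ z ∈ V1, θ z := Finset.sum_union_inter
      rw [hcover, hv, Finset.sum_singleton] at h1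
      have h2 : θ v + ∑ y ∈ V0.erase v, θ y = ∑ z ∈ V0, θ z :=
        Finset.add_sum_erase V0 θ hv0
      have h3 : θ v + ∑ y ∈ V1.erase v, θ y = ∑ z ∈ V1, θ z :=
        Finset.add_sum_erase V1 θ hv1
      rw [show ∑ z ∈ Finset.univ, θ z = 0 from hsum] at h1
      linarith
    constructor
    · intro z
      by_cases h0 : z ∈ V0 <;> by_cases h1 : z ∈ V1
      · have hz : z = v := hkey z h0 h1
        subst hz
        simp only [h0, h1, if_true, if_pos rfl]
        linarith
      · have hz : z ≠ v := fun h => h1 (h ▸ hv1)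
        simp [h0, h1, hz]
      · have hz : z ≠ v := fun h => h0 (h ▸ hv0)
        simp [h0, h1, hz]
      · exfalso
        have : z ∈ V0 ∪ V1 := by rw [hcover]; exact Finset.mem_univ z
        rcases Finset.mem_union.1 this with h | h
        · exact h0 h
        · exact h1 h
    · intro x
      constructor
      · rintro ⟨hx, hf⟩
        -- pflow values away from v
        have hp0 : ∀ z : V, z ∈ V0 → z ≠ v →
            pflow s t (fun a => s a ∈ V0 ∧ t a ∈ V0) x z = (θ z : ℝ) := by
          intro z h0 hz
          have h1 := flow_split_s8 s t V0 V1 harrows hdisjarr x z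
          have h2 : pflow s t (fun a => s a ∈ V1 ∧ t a ∈ V1) x z = 0 :=
            pflow_zero s t V1 x z (fun h1' => hz (hkey z h0 h1'))
          have h3 := hf z
          rw [h1, h2] at h3
          simpa using h3
        have hp1 : ∀ z : V, z ∈ V1 → z ≠ v →
            pflow s t (fun a => s a ∈ V1 ∧ t a ∈ V1) x z = (θ z : ℝ) := by
          intro z h1' hz
          have h1 := flow_split_s8 s t V0 V1 harrows hdisjarr x z
          have h2 : pflow s t (fun a => s a ∈ V0 ∧ t a ∈ V0) x z = 0 :=
            pflow_zero s t V0 x z (fun h0' => hz (hkey z h0' h1'))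
          have h3 := hf z
          rw [h1, h2] at h3
          simpa using h3
        have hp0v : pflow s t (fun a => s a ∈ V0 ∧ t a ∈ V0) x v
            = -(∑ y ∈ V0.erase v, (θ y : ℝ)) := by
          have h1 : pflow s t (fun a => s a ∈ V0 ∧ t a ∈ V0) x v
              + ∑ z ∈ V0.erase v, pflow s t (fun a => s a ∈ V0 ∧ t a ∈ V0) x z
              = ∑ z ∈ V0, pflow s t (fun a => s a ∈ V0 ∧ t a ∈ V0) x z :=
            Finset.add_sum_erase V0 _ hv0
          rw [sum_pflow s t V0 x] at h1
          have h2 : ∑ z ∈ V0.erase v, pflow s t (fun a => s a ∈ V0 ∧ t a ∈ V0) x z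
              = ∑ z ∈ V0.erase v, (θ z : ℝ) := by
            refine Finset.sum_congr rfl fun z hz => ?_
            exact hp0 z (Finset.mem_of_mem_erase hz) (Finset.ne_of_mem_erase hz)
          rw [h2] at h1
          linarith
        have hp1v : pflow s t (fun a => s a ∈ V1 ∧ t a ∈ V1) x v
            = -(∑ y ∈ V1.erase v, (θ y : ℝ)) := by
          have h1 : pflow s t (fun a => s a ∈ V1 ∧ t a ∈ V1) x v
              + ∑ z ∈ V1.erase v, pflow s t (fun a => s a ∈ V1 ∧ t a ∈ V1) x z
              = ∑ z ∈ V1, pflow s t (fun a => s a ∈ V1 ∧ t a ∈ V1) x z :=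
            Finset.add_sum_erase V1 _ hv1
          rw [sum_pflow s t V1 x] at h1
          have h2 : ∑ z ∈ V1.erase v, pflow s t (fun a => s a ∈ V1 ∧ t a ∈ V1) x z
              = ∑ z ∈ V1.erase v, (θ z : ℝ) := by
            refine Finset.sum_congr rfl fun z hz => ?_
            exact hp1 z (Finset.mem_of_mem_erase hz) (Finset.ne_of_mem_erase hz)
          rw [h2] at h1
          linarith
        refine ⟨⟨fun a => hx a.1, ?_⟩, ⟨fun a => hx a.1, ?_⟩⟩
        · rintro ⟨z, hz⟩
          rw [sub_flow s t V0 x z hz]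
          by_cases hzv : z = v
          · subst hzv
            rw [hp0v]
            push_cast
            simp
          · rw [hp0 z hz hzv]
            simp [hzv]
        · rintro ⟨z, hz⟩
          rw [sub_flow s t V1 x z hz]
          by_cases hzv : z = v
          · subst hzv
            rw [hp1v]
            push_cast
            simp
          · rw [hp1 z hz hzv]
            simp [hzv]
      · rintro ⟨⟨hx0, hf0⟩, ⟨hx1, hf1⟩⟩
        have hp0 : ∀ z : V, (h0 : z ∈ V0) →
            pflow s t (fun a => s a ∈ V0 ∧ t a ∈ V0) x z
              = if z = v then -(∑ y ∈ V0.erase v, (θ y : ℝ)) else (θ z : ℝ) := by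
          intro z h0
          have h3 := hf0 ⟨z, h0⟩
          rw [sub_flow s t V0 x z h0] at h3
          rw [h3]
          by_cases hzv : z = v <;> simp [hzv]
        have hp1 : ∀ z : V, (h1 : z ∈ V1) →
            pflow s t (fun a => s a ∈ V1 ∧ t a ∈ V1) x z
              = if z = v then -(∑ y ∈ V1.erase v, (θ y : ℝ)) else (θ z : ℝ) := by
          intro z h1
          have h3 := hf1 ⟨z, h1⟩
          rw [sub_flow s t V1 x z h1] at h3
          rw [h3]
          by_cases hzv : z = v <;> simp [hzv]
        constructor
        · intro a
          rcases harrows a with h | h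
          · exact hx0 ⟨a, h⟩
          · exact hx1 ⟨a, h⟩
        · intro z
          rw [flow_split_s8 s t V0 V1 harrows hdisjarr x z]
          by_cases h0 : z ∈ V0 <;> by_cases h1 : z ∈ V1
          · have hz : z = v := hkey z h0 h1
            rw [hp0 z h0, hp1 z h1, if_pos hz, if_pos hz, hz]
            exact_mod_cast hθv.symm
          · have hz : z ≠ v := fun h => h1 (h ▸ hv1)
            rw [hp0 z h0, pflow_zero s t V1 x z h1]
            simp [hz]
          · have hz : z ≠ v := fun h => h0 (h ▸ hv0)
            rw [hp1 z h1, pflow_zero s t V0 x z h0]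
            simp [hz]
          · exfalso
            have : z ∈ V0 ∪ V1 := by rw [hcover]; exact Finset.mem_univ z
            rcases Finset.mem_union.1 this with h | h
            · exact h0 h
            · exact h1 h
end

section
/- Let d ≥ 2. (a) If Γ is a prime undirected multigraph with χ(Γ) = d in which every vertex has valency at least 3, then Γ has at most 2d − 2 vertices and at most 3d − 3 edges. (b) If Q is a quiver with no oriented cycles obtained from such a graph Γ by choosing an orientation for some of the edges and replacing each of the remaining edges by a length-two path consisting of two arrows pointing to a new middle vertex (a sink), then |Q0| ≤ 5(d − 1) and |Q1| ≤ 6(d − 1). -/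
/-- The simple graph underlying an undirected multigraph with edge-end map `ends`. -/
def mgraphAdj {V E : Type} (ends : E → Sym2 V) : SimpleGraph V :=
  SimpleGraph.fromRel (fun v w => ∃ e : E, ends e = s(v, w))

open Classical in
/-- The valency of a vertex of a multigraph: the number of edge-endpoints incident to
it (a loop counts twice). -/
noncomputable def mdeg {V E : Type} [Fintype E] (ends : E → Sym2 V) (v : V) : ℕ :=
  ∑ e : E, (if ends e = s(v, v) then 2 else if v ∈ ends e then 1 else 0)

/-- All endpoints of the edge `e` lie in `S`. -/
def EdgeWithin {V E : Type} (ends : E → Sym2 V) (S : Set V) (e : E) : Prop :=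
  ∀ x ∈ ends e, x ∈ S

/-- A connected undirected multigraph with at least one edge is prime if it is not the
union of two full proper subgraphs having exactly one common vertex. -/
def MultigraphPrime {V E : Type} (ends : E → Sym2 V) : Prop :=
  (mgraphAdj ends).Connected ∧ Nonempty E ∧
    ¬ ∃ S T : Set V, S ∪ T = Set.univ ∧ S ≠ Set.univ ∧ T ≠ Set.univ ∧
      (∃ v : V, S ∩ T = {v}) ∧ ∀ e : E, EdgeWithin ends S e ∨ EdgeWithin ends T e

/-- Source map of the quiver obtained from a multigraph by orienting the edges in `D`
(using the labelling `o` of the endpoints) and subdividing each remaining edge by a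
new sink in the middle. -/
def qsrc {V E : Type} [DecidableEq E] (D : Finset E) (o : E → V × V) :
    ({e : E // e ∈ D} ⊕ {e : E // e ∉ D} ⊕ {e : E // e ∉ D}) → (V ⊕ {e : E // e ∉ D})
  | .inl e => .inl (o e.1).1
  | .inr (.inl e) => .inl (o e.1).1
  | .inr (.inr e) => .inl (o e.1).2

/-- Target map of the quiver obtained by orienting the edges in `D` and subdividing
the remaining edges by a new sink. -/
def qtgt {V E : Type} [DecidableEq E] (D : Finset E) (o : E → V × V) :
    ({e : E // e ∈ D} ⊕ {e : E // e ∉ D} ⊕ {e : E // e ∉ D}) → (V ⊕ {e : E // e ∉ D})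
  | .inl e => .inl (o e.1).2
  | .inr (.inl e) => .inr e
  | .inr (.inr e) => .inr e

open Classical in
lemma sum_incidence_eq_two {V : Type} [Fintype V] (z : Sym2 V) :
    ∑ v : V, (if z = s(v, v) then 2 else if v ∈ z then 1 else 0) = 2 := by
  induction z using Sym2.ind with
  | _ a b =>
  have hsplit : ∀ v : V, (if s(a, b) = s(v, v) then 2 else if v ∈ s(a, b) then 1 else 0) =
      (if v = a then 1 else 0) + (if v = b then 1 else 0) := by
    intro v
    by_cases hva : v = a <;> by_cases hvb : v = b <;> simp_all [eq_comm]
  rw [Finset.sum_congr rfl fun v _ => hsplit v]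
  simp [Finset.sum_add_distrib]

lemma sum_mdeg_eq_two_mul_card {V E : Type} [Fintype V] [Fintype E] (ends : E → Sym2 V) :
    ∑ v : V, mdeg ends v = 2 * Fintype.card E := by
  simp only [mdeg]
  rw [Finset.sum_comm]
  simp [sum_incidence_eq_two, mul_comm]

lemma SimpleGraph.Connected.card_connectedComponent {V : Type} {G : SimpleGraph V}
    (h : G.Connected) : Nat.card G.ConnectedComponent = 1 := by
  have := h.preconnected.subsingleton_connectedComponent
  have := h.nonempty
  exact Nat.card_unique

lemma mul_card_le_two_mul_card_of_le_mdeg {V E : Type} [Fintype V] [Fintype E]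
    {ends : E → Sym2 V} {k : ℕ} (hk : ∀ v, k ≤ mdeg ends v) :
    k * Fintype.card V ≤ 2 * Fintype.card E := by
  rw [← sum_mdeg_eq_two_mul_card ends, mul_comm, ← smul_eq_mul, ← Finset.card_univ,
    ← Finset.sum_const]
  exact Finset.sum_le_sum fun v _ => hk v

theorem stmt9_general {V E : Type} [Fintype V] [Fintype E] [DecidableEq E]
    (ends : E → Sym2 V) (d : ℕ)
    (hchi : Fintype.card E + Nat.card (mgraphAdj ends).ConnectedComponent
      = Fintype.card V + d)
    (hprime : MultigraphPrime ends)
    (hval : ∀ v : V, 3 ≤ mdeg ends v) :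
    (Fintype.card V ≤ 2 * d - 2 ∧ Fintype.card E ≤ 3 * d - 3) ∧
    ∀ (D : Finset E) (o : E → V × V), (∀ e : E, Sym2.mk (o e).1 (o e).2 = ends e) →
      ¬ HasOrientedCycle (qsrc D o) (qtgt D o) →
      Fintype.card (V ⊕ {e : E // e ∉ D}) ≤ 5 * (d - 1) ∧
      Fintype.card ({e : E // e ∈ D} ⊕ {e : E // e ∉ D} ⊕ {e : E // e ∉ D}) ≤ 6 * (d - 1) := by
  have hcomp := hprime.1.card_connectedComponent
  have hdeg := mul_card_le_two_mul_card_of_le_mdeg hval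
  have hV : Fintype.card V ≤ 2 * d - 2 := by omega
  have hE : Fintype.card E ≤ 3 * d - 3 := by omega
  refine ⟨⟨hV, hE⟩, fun D o _ _ => ?_⟩
  have hD : D.card ≤ Fintype.card E := D.card_le_univ
  simp only [Fintype.card_sum, Fintype.card_subtype_compl, Fintype.card_coe]
  omega

/-- bounds on prime multigraphs `Γ` with `χ(Γ) = d ≥ 2` and all valencies
at least `3`, and on the quivers obtained from them by orienting some edges and
putting a sink on the remaining edges. -/
theorem stmt9 {V E : Type} [Fintype V] [Fintype E] [DecidableEq V] [DecidableEq E]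
    (ends : E → Sym2 V) (d : ℕ) (hd : 2 ≤ d)
    (hchi : Fintype.card E + Nat.card (mgraphAdj ends).ConnectedComponent
      = Fintype.card V + d)
    (hprime : MultigraphPrime ends)
    (hval : ∀ v : V, 3 ≤ mdeg ends v) :
    (Fintype.card V ≤ 2 * d - 2 ∧ Fintype.card E ≤ 3 * d - 3) ∧
    ∀ (D : Finset E) (o : E → V × V), (∀ e : E, Sym2.mk (o e).1 (o e).2 = ends e) →
      ¬ HasOrientedCycle (qsrc D o) (qtgt D o) →
      Fintype.card (V ⊕ {e : E // e ∉ D}) ≤ 5 * (d - 1) ∧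
      Fintype.card ({e : E // e ∈ D} ⊕ {e : E // e ∉ D} ⊕ {e : E // e ∉ D}) ≤ 6 * (d - 1) :=
  stmt9_general ends d hchi hprime hval
end
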